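/- For every positive integer m there exists an integer K ≥ 0 such that 3^K · m is stable, i.e., such that ‖3^k · (3^K · m)‖ = 3k + ‖3^K · m‖ holds for every integer k ≥ 1. -/

import Mathlib

open Real

/-- `Writes n k` means the positive integer `n` can be written using exactly `k` ones
combined by additions and multiplications. -/
inductive Writes : ℕ → ℕ → Prop
  | one : Writes 1 1
  | add {a b m n : ℕ} : Writes a m → Writes b n → Writes (a + b) (m + n)
  | mul {a b m n : ℕ} : Writes a m → Writes b n → Writes (a * b) (m + n)

/-- The integer complexity `‖n‖`: the least number of 1's needed to write `n`
using additions and multiplications. -/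
noncomputable def cpx (n : ℕ) : ℕ := sInf {k | Writes n k}

/-- The defect `δ(n) = ‖n‖ - 3 log₃ n`. -/
noncomputable def defect (n : ℕ) : ℝ := (cpx n : ℝ) - 3 * Real.logb 3 n

/-
Writing `n` with `k` ones forces `n ^ 3 ≤ 3 ^ k`, so `‖3 ^ K * m‖ ≥ 3 K`; on the other hand
`‖3 n‖ ≤ ‖n‖ + 3`. Hence the natural number `‖3 ^ K * m‖ - 3 K` is non-increasing in `K`, and
from an index where it is minimal on, it is constant, which is stability.
-/

lemma succ_pow_three_le_three_pow_succ {b q : ℕ} (hb : 1 ≤ b) (hq : 1 ≤ q)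
    (h : b ^ 3 ≤ 3 ^ q) : (b + 1) ^ 3 ≤ 3 ^ (q + 1) := by
  rcases (by omega : b = 1 ∨ b = 2 ∨ 3 ≤ b) with rfl | rfl | hb3
  · calc (1 + 1) ^ 3 ≤ 3 ^ 2 := by norm_num
      _ ≤ 3 ^ (q + 1) := Nat.pow_le_pow_right (by norm_num) (by omega)
  · have hq2 : 2 ≤ q := by
      by_contra! hq2
      obtain rfl : q = 1 := by omega
      norm_num at h
    calc (2 + 1) ^ 3 = 3 ^ 3 := by norm_num
      _ ≤ 3 ^ (q + 1) := Nat.pow_le_pow_right (by norm_num) (by omega)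
  · calc (b + 1) ^ 3 ≤ 3 * b ^ 3 := by nlinarith [Nat.mul_le_mul hb3 hb3]
      _ ≤ 3 * 3 ^ q := Nat.mul_le_mul_left 3 h
      _ = 3 ^ (q + 1) := (pow_succ' 3 q).symm

lemma add_pow_three_le_three_pow_add {a b p q : ℕ} (ha : 1 ≤ a) (hb : 1 ≤ b) (hp : 1 ≤ p)
    (hq : 1 ≤ q) (hap : a ^ 3 ≤ 3 ^ p) (hbq : b ^ 3 ≤ 3 ^ q) : (a + b) ^ 3 ≤ 3 ^ (p + q) := by
  rcases (by omega : a = 1 ∨ b = 1 ∨ (2 ≤ a ∧ 2 ≤ b)) with rfl | rfl | ⟨ha2, hb2⟩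
  · calc (1 + b) ^ 3 ≤ 3 ^ (q + 1) := add_comm 1 b ▸ succ_pow_three_le_three_pow_succ hb hq hbq
      _ ≤ 3 ^ (p + q) := Nat.pow_le_pow_right (by norm_num) (by omega)
  · calc (a + 1) ^ 3 ≤ 3 ^ (p + 1) := succ_pow_three_le_three_pow_succ ha hp hap
      _ ≤ 3 ^ (p + q) := Nat.pow_le_pow_right (by norm_num) (by omega)
  · calc (a + b) ^ 3 ≤ (a * b) ^ 3 := Nat.pow_le_pow_left (by nlinarith) 3
      _ = a ^ 3 * b ^ 3 := mul_pow a b 3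
      _ ≤ 3 ^ (p + q) := pow_add 3 p q ▸ Nat.mul_le_mul hap hbq

namespace Writes

lemma one_le {n k : ℕ} (h : Writes n k) : 1 ≤ n ∧ 1 ≤ k := by
  induction h with
  | one => exact ⟨le_rfl, le_rfl⟩
  | add _ _ iha ihb => omega
  | mul _ _ iha ihb => exact ⟨by simpa using Nat.mul_le_mul iha.1 ihb.1, by omega⟩

lemma pow_three_le {n k : ℕ} (h : Writes n k) : n ^ 3 ≤ 3 ^ k := by
  induction h with
  | one => norm_num
  | add ha hb iha ihb =>
    exact add_pow_three_le_three_pow_add ha.one_le.1 hb.one_le.1 ha.one_le.2 hb.one_le.2 iha ihb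
  | mul _ _ iha ihb => rw [mul_pow, pow_add]; exact Nat.mul_le_mul iha ihb

lemma exists_of_pos {n : ℕ} (hn : 0 < n) : ∃ k, Writes n k := by
  induction n with
  | zero => omega
  | succ n ih =>
    rcases Nat.eq_zero_or_pos n with rfl | hn
    · exact ⟨1, one⟩
    · obtain ⟨k, hk⟩ := ih hn
      exact ⟨k + 1, add hk one⟩

end Writes

lemma writes_cpx {n : ℕ} (hn : 0 < n) : Writes n (cpx n) :=
  Nat.sInf_mem (Writes.exists_of_pos hn)

lemma cpx_le_of_writes {n k : ℕ} (h : Writes n k) : cpx n ≤ k := Nat.sInf_le h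

lemma cpx_three_mul_le {n : ℕ} (hn : 0 < n) : cpx (3 * n) ≤ cpx n + 3 := by
  have three : Writes 3 3 := .add (.add .one .one) .one
  simpa [add_comm] using cpx_le_of_writes (three.mul (writes_cpx hn))

lemma three_mul_le_cpx_three_pow_mul {m : ℕ} (hm : 0 < m) (K : ℕ) :
    3 * K ≤ cpx (3 ^ K * m) := by
  refine (Nat.pow_le_pow_iff_right (by norm_num : 1 < 3)).1 ?_
  calc 3 ^ (3 * K) = (3 ^ K) ^ 3 := by rw [← pow_mul, mul_comm]
    _ ≤ (3 ^ K * m) ^ 3 := Nat.pow_le_pow_left (Nat.le_mul_of_pos_right _ hm) 3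
    _ ≤ 3 ^ cpx (3 ^ K * m) := (writes_cpx (by positivity)).pow_three_le

lemma Nat.exists_forall_add_eq_mul_add {f : ℕ → ℕ} {c : ℕ} (hlow : ∀ K, c * K ≤ f K)
    (hstep : ∀ K, f (K + 1) ≤ f K + c) : ∃ K, ∀ k, f (K + k) = c * k + f K := by
  obtain ⟨K, hK⟩ : ∃ K, ∀ j, f K - c * K ≤ f j - c * j :=
    ⟨_, fun j ↦ Function.argmin_le (fun K ↦ f K - c * K) j⟩
  have hanti : Antitone fun K ↦ f K - c * K := antitone_nat_of_succ_le fun K ↦ by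
    have := hstep K
    rw [mul_add_one]
    omega
  refine ⟨K, fun k ↦ ?_⟩
  have hKk := hanti (Nat.le_add_right K k)
  have := hK (K + k)
  have := hlow K
  have := hlow (K + k)
  simp only [mul_add] at *
  omega

/-- For every m ≥ 1 there is K ≥ 0 such that 3^K·m is stable. -/
theorem exists_stable_multiple (m : ℕ) (hm : 0 < m) :
    ∃ K : ℕ, ∀ k : ℕ, 1 ≤ k →
      cpx (3 ^ k * (3 ^ K * m)) = 3 * k + cpx (3 ^ K * m) := by
  obtain ⟨K, hK⟩ := Nat.exists_forall_add_eq_mul_add (f := fun K ↦ cpx (3 ^ K * m))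
    (three_mul_le_cpx_three_pow_mul hm) fun K ↦ by
      simpa [pow_succ, mul_assoc, mul_comm 3] using cpx_three_mul_le (n := 3 ^ K * m) (by positivity)
  refine ⟨K, fun k _ ↦ ?_⟩
  rw [← mul_assoc, ← pow_add, add_comm k]
  exact hK k
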